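/- arXiv:1508.04196 — 7 statements merged into one kernel-verified Lean document; each statement's English description precedes it below -/
import Mathlib

section
/- Let A, B : ℝ → ℝ be continuous on [−1, 1]. Suppose that for every K ∈ ℝ there exists s ∈ (−1, 1) such that B(s)(K − A(s)) < 0. Then B changes sign on (−1, 1): there exist s₁, s₂ ∈ (−1, 1) with B(s₁) < 0 and B(s₂) > 0. -/
open Set

/-- **Proposition 4.3.4.** If `A`, `B` are continuous real-valued functions on `[-1,1]`
and for every `K ∈ ℝ` there is `s ∈ (-1,1)` with `B(s)(K - A(s)) < 0`, then `B` changes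
sign on `(-1,1)`. -/
theorem fjortoft_implies_rayleigh
    (A B : ℝ → ℝ)
    (hA : ContinuousOn A (Set.Icc (-1) 1))
    (hB : ContinuousOn B (Set.Icc (-1) 1))
    (hFjortoft : ∀ K : ℝ, ∃ s ∈ Set.Ioo (-1 : ℝ) 1, B s * (K - A s) < 0) :
    (∃ s₁ ∈ Set.Ioo (-1 : ℝ) 1, B s₁ < 0) ∧ (∃ s₂ ∈ Set.Ioo (-1 : ℝ) 1, 0 < B s₂) := by
  obtain ⟨M, hM⟩ := (isCompact_Icc (a := (-1:ℝ)) (b := 1)).exists_bound_of_continuousOn hA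
  constructor
  · obtain ⟨s, hs, h⟩ := hFjortoft (M + 1)
    refine ⟨s, hs, ?_⟩
    have hAs : A s ≤ M := (abs_le.mp (hM s (Ioo_subset_Icc_self hs))).2
    have hpos : 0 < M + 1 - A s := by linarith
    nlinarith
  · obtain ⟨s, hs, h⟩ := hFjortoft (-(M + 1))
    refine ⟨s, hs, ?_⟩
    have hAs : -M ≤ A s := (abs_le.mp (hM s (Ioo_subset_Icc_self hs))).1
    have hneg : -(M + 1) - A s < 0 := by linarith
    nlinarith
end

section
/- Let (X, μ) be a measure space, let A, B : X → ℝ be bounded measurable functions, let η ∈ L²(X, μ; ℂ), and let λ ∈ ℂ with Im λ ≠ 0. Suppose the integral I = ∫_X B(x)/(λ − A(x)) · |η(x)|² dμ(x) is a real number and I < 0. Then: (i) ∫_X B(x)/|λ − A(x)|² · |η(x)|² dμ(x) = 0; (ii) for every K ∈ ℝ, ∫_X B(x)(K − A(x))/|λ − A(x)|² · |η(x)|² dμ(x) = I < 0; and (iii) the sets {x ∈ X : B(x) > 0 and η(x) ≠ 0} and {x ∈ X : B(x) < 0 and η(x) ≠ 0} both have positive μ-measure. -/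
/-!
Since `A` is real, `1 / (λ - A) = (conj λ - A) / |λ - A|²`. Hence the integrand
`B / (λ - A) |η|²` has imaginary part `-Im λ · G` with `G = B / |λ - A|² |η|²` and real part
`B (Re λ - A) / |λ - A|² |η|²`. As `I` is real and `Im λ ≠ 0`, `∫ G = 0`, and adding
`(K - Re λ) ∫ G = 0` to the real part gives the `K`-identity. Since
`B (K - A) / |λ - A|² |η|² = (K - A) G` integrates to `I ≠ 0`, `G` is not a.e. zero; an integrable
function with zero integral that is not a.e. zero is positive, and negative, on sets of positive
measure, and where `η ≠ 0` the sign of `G` is that of `B`.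
-/

open MeasureTheory Complex

namespace Complex

lemma re_ofReal_div_sub_ofReal_mul_sq (lam : ℂ) (a b w : ℝ) :
    ((b : ℂ) / (lam - a) * (w : ℂ) ^ 2).re = b * (lam.re - a) / ‖lam - a‖ ^ 2 * w ^ 2 := by
  rw [← ofReal_pow, re_mul_ofReal, div_re, ← normSq_eq_norm_sq]
  simp [mul_div_assoc]

lemma im_ofReal_div_sub_ofReal_mul_sq (lam : ℂ) (a b w : ℝ) :
    ((b : ℂ) / (lam - a) * (w : ℂ) ^ 2).im = -lam.im * (b / ‖lam - a‖ ^ 2 * w ^ 2) := by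
  rw [← ofReal_pow, im_mul_ofReal, div_im, ← normSq_eq_norm_sq]
  simp only [ofReal_im, ofReal_re, sub_re, sub_im, sub_zero, zero_mul, zero_div, zero_sub,
    neg_mul, neg_inj]
  ring

lemma abs_im_le_norm_sub_ofReal (lam : ℂ) (a : ℝ) : |lam.im| ≤ ‖lam - a‖ := by
  simpa using abs_im_le_norm (lam - a)

lemma norm_ofReal_div_sub_ofReal_le {lam : ℂ} (hlam : lam.im ≠ 0) (a b : ℝ) :
    ‖(b : ℂ) / (lam - a)‖ ≤ |b| / |lam.im| := by
  rw [norm_div, norm_real, Real.norm_eq_abs]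
  exact div_le_div_of_nonneg_left (abs_nonneg b) (abs_pos.2 hlam)
    (abs_im_le_norm_sub_ofReal lam a)

lemma norm_sub_ofReal_sq_pos {lam : ℂ} (hlam : lam.im ≠ 0) (a : ℝ) : 0 < ‖lam - a‖ ^ 2 :=
  pow_pos ((abs_pos.2 hlam).trans_le (abs_im_le_norm_sub_ofReal lam a)) 2

end Complex

theorem div_mul_norm_sq_pos_iff {E : Type*} [NormedAddCommGroup E] {b N : ℝ} (hN : 0 < N)
    (z : E) : 0 < b / N * ‖z‖ ^ 2 ↔ 0 < b ∧ z ≠ 0 := by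
  rcases eq_or_ne z 0 with rfl | hz
  · simp
  · rw [mul_pos_iff_of_pos_right (by positivity), div_pos_iff_of_pos_right hN]
    exact (and_iff_left hz).symm

theorem div_mul_norm_sq_neg_iff {E : Type*} [NormedAddCommGroup E] {b N : ℝ} (hN : 0 < N)
    (z : E) : b / N * ‖z‖ ^ 2 < 0 ↔ b < 0 ∧ z ≠ 0 := by
  simpa [neg_div] using div_mul_norm_sq_pos_iff (b := -b) hN z

namespace MeasureTheory.Integrable

variable {X : Type*} [MeasurableSpace X] {μ : Measure X} {f : X → ℝ}

theorem measure_setOf_pos_pos_of_integral_eq_zero (hf : Integrable f μ)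
    (h0 : ∫ x, f x ∂μ = 0) (hne : ¬ f =ᵐ[μ] 0) : 0 < μ {x | 0 < f x} := by
  refine pos_iff_ne_zero.2 fun hpos => hne ?_
  have hnonpos : f ≤ᵐ[μ] 0 := by
    rw [Filter.EventuallyLE, ae_iff]
    simpa using hpos
  have hneg : -f =ᵐ[μ] 0 := (integral_eq_zero_iff_of_nonneg_ae
    (hnonpos.mono fun x hx => neg_nonneg.2 hx) hf.neg).1 (by rw [integral_neg, h0, neg_zero])
  filter_upwards [hneg] with x hx using neg_eq_zero.1 hx

theorem measure_setOf_neg_pos_of_integral_eq_zero (hf : Integrable f μ)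
    (h0 : ∫ x, f x ∂μ = 0) (hne : ¬ f =ᵐ[μ] 0) : 0 < μ {x | f x < 0} := by
  have h0' : ∫ x, -f x ∂μ = 0 := by rw [integral_neg, h0, neg_zero]
  have hne' : ¬ -f =ᵐ[μ] 0 := fun h => hne (by filter_upwards [h] with x hx using neg_eq_zero.1 hx)
  simpa using hf.neg.measure_setOf_pos_pos_of_integral_eq_zero h0' hne'

end MeasureTheory.Integrable

section Rayleigh

variable {X : Type*} [MeasurableSpace X] {μ : Measure X} {A B : X → ℝ} {η : X → ℂ} {lam : ℂ}
  {I : ℝ}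

theorem integrable_ofReal_div_sub_ofReal_mul_norm_sq (hA : Measurable A) (hB : Measurable B)
    (hBbdd : ∃ C : ℝ, ∀ x, |B x| ≤ C) (hη : MemLp η 2 μ) (hlam : lam.im ≠ 0) :
    Integrable (fun x => (B x : ℂ) / (lam - A x) * (‖η x‖ : ℂ) ^ 2) μ := by
  obtain ⟨C, hC⟩ := hBbdd
  have hη2 : Integrable (fun x => ((‖η x‖ ^ 2 : ℝ) : ℂ)) μ := hη.norm.integrable_sq.ofReal
  push_cast at hη2
  have hmeas : Measurable fun x => (B x : ℂ) / (lam - A x) := by fun_prop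
  refine hη2.bdd_mul (c := C / |lam.im|) hmeas.aestronglyMeasurable
    (Filter.Eventually.of_forall fun x => ?_)
  exact (norm_ofReal_div_sub_ofReal_le hlam _ _).trans
    (div_le_div_of_nonneg_right (hC x) (abs_nonneg _))

theorem integrable_div_norm_sub_ofReal_sq_mul_norm_sq (hlam : lam.im ≠ 0)
    (hF : Integrable (fun x => (B x : ℂ) / (lam - A x) * (‖η x‖ : ℂ) ^ 2) μ) :
    Integrable (fun x => B x / ‖lam - A x‖ ^ 2 * ‖η x‖ ^ 2) μ := by
  refine (integrable_const_mul_iff (neg_ne_zero.2 hlam).isUnit _).1 ?_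
  simpa only [RCLike.im_eq_complex_im, im_ofReal_div_sub_ofReal_mul_sq] using hF.im

theorem integral_div_norm_sub_ofReal_sq_mul_norm_sq_eq_zero (hlam : lam.im ≠ 0)
    (hF : Integrable (fun x => (B x : ℂ) / (lam - A x) * (‖η x‖ : ℂ) ^ 2) μ)
    (hI : ∫ x, (B x : ℂ) / (lam - A x) * (‖η x‖ : ℂ) ^ 2 ∂μ = I) :
    ∫ x, B x / ‖lam - A x‖ ^ 2 * ‖η x‖ ^ 2 ∂μ = 0 := by
  have h := integral_im hF
  simp only [RCLike.im_eq_complex_im, im_ofReal_div_sub_ofReal_mul_sq, integral_const_mul,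
    hI, ofReal_im] at h
  exact (mul_eq_zero.1 h).resolve_left (neg_ne_zero.2 hlam)

theorem integral_mul_sub_div_norm_sub_ofReal_sq_mul_norm_sq (hlam : lam.im ≠ 0)
    (hF : Integrable (fun x => (B x : ℂ) / (lam - A x) * (‖η x‖ : ℂ) ^ 2) μ)
    (hI : ∫ x, (B x : ℂ) / (lam - A x) * (‖η x‖ : ℂ) ^ 2 ∂μ = I) (K : ℝ) :
    ∫ x, B x * (K - A x) / ‖lam - A x‖ ^ 2 * ‖η x‖ ^ 2 ∂μ = I := by
  have hre := integral_re hF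
  simp only [RCLike.re_eq_complex_re, re_ofReal_div_sub_ofReal_mul_sq, hI, ofReal_re] at hre
  have hR : Integrable (fun x => B x * (lam.re - A x) / ‖lam - A x‖ ^ 2 * ‖η x‖ ^ 2) μ := by
    simpa only [RCLike.re_eq_complex_re, re_ofReal_div_sub_ofReal_mul_sq] using hF.re
  have hG := integrable_div_norm_sub_ofReal_sq_mul_norm_sq hlam hF
  calc ∫ x, B x * (K - A x) / ‖lam - A x‖ ^ 2 * ‖η x‖ ^ 2 ∂μ
      = ∫ x, B x * (lam.re - A x) / ‖lam - A x‖ ^ 2 * ‖η x‖ ^ 2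
          + (K - lam.re) * (B x / ‖lam - A x‖ ^ 2 * ‖η x‖ ^ 2) ∂μ := by
        congr 1 with x
        ring
    _ = I := by
        rw [integral_add hR (hG.const_mul _), integral_const_mul,
          integral_div_norm_sub_ofReal_sq_mul_norm_sq_eq_zero hlam hF hI, hre, mul_zero, add_zero]

end Rayleigh

theorem rayleigh_fjortoft_necessary_conditions_general
    {X : Type*} [MeasurableSpace X] (μ : Measure X)
    (A B : X → ℝ) (hAmeas : Measurable A) (hBmeas : Measurable B)
    (hBbdd : ∃ C : ℝ, ∀ x, |B x| ≤ C)
    (η : X → ℂ) (hη : MemLp η 2 μ)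
    (lam : ℂ) (hlam : lam.im ≠ 0) (I : ℝ) (hIneg : I < 0)
    (hI : ∫ x, (B x : ℂ) / (lam - (A x : ℂ)) * ((‖η x‖ : ℂ)) ^ 2 ∂μ = (I : ℂ)) :
    (∫ x, B x / ‖lam - (A x : ℂ)‖ ^ 2 * ‖η x‖ ^ 2 ∂μ = 0) ∧
    (∀ K : ℝ,
      ∫ x, B x * (K - A x) / ‖lam - (A x : ℂ)‖ ^ 2 * ‖η x‖ ^ 2 ∂μ = I) ∧
    0 < μ {x | 0 < B x ∧ η x ≠ 0} ∧ 0 < μ {x | B x < 0 ∧ η x ≠ 0} := by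
  have hF := integrable_ofReal_div_sub_ofReal_mul_norm_sq hAmeas hBmeas hBbdd hη hlam
  have hG := integrable_div_norm_sub_ofReal_sq_mul_norm_sq hlam hF
  have hG0 := integral_div_norm_sub_ofReal_sq_mul_norm_sq_eq_zero hlam hF hI
  have hK := integral_mul_sub_div_norm_sub_ofReal_sq_mul_norm_sq hlam hF hI
  have hG_ne : ¬ (fun x => B x / ‖lam - (A x : ℂ)‖ ^ 2 * ‖η x‖ ^ 2) =ᵐ[μ] 0 := fun h => by
    refine hIneg.ne ((hK 0).symm.trans (integral_eq_zero_of_ae (h.mono fun x hx => ?_)))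
    simp only [Pi.zero_apply] at hx ⊢
    linear_combination (0 - A x) * hx
  have hN := norm_sub_ofReal_sq_pos hlam
  refine ⟨hG0, hK, ?_, ?_⟩
  · simpa only [div_mul_norm_sq_pos_iff (hN _)] using
      hG.measure_setOf_pos_pos_of_integral_eq_zero hG0 hG_ne
  · simpa only [div_mul_norm_sq_neg_iff (hN _)] using
      hG.measure_setOf_neg_pos_of_integral_eq_zero hG0 hG_ne

/-- The analytic heart of Propositions 4.2.3 and 4.3.3 (Rayleigh and Fjortoft
necessary conditions): if `Im λ ≠ 0` and the integral
`I = ∫ B(x)/(λ - A(x)) |η(x)|² dμ` is a (negative) real number, then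
(i) `∫ B/|λ-A|² |η|² dμ = 0`, (ii) `∫ B(K-A)/|λ-A|² |η|² dμ = I < 0` for every real `K`,
and (iii) `B` takes both signs on a set of positive measure where `η ≠ 0`. -/
theorem rayleigh_fjortoft_necessary_conditions
    {X : Type*} [MeasurableSpace X] (μ : Measure X)
    (A B : X → ℝ) (hAmeas : Measurable A) (hBmeas : Measurable B)
    (hAbdd : ∃ C : ℝ, ∀ x, |A x| ≤ C) (hBbdd : ∃ C : ℝ, ∀ x, |B x| ≤ C)
    (η : X → ℂ) (hη : MemLp η 2 μ)
    (lam : ℂ) (hlam : lam.im ≠ 0) (I : ℝ) (hIneg : I < 0)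
    (hI : ∫ x, (B x : ℂ) / (lam - (A x : ℂ)) * ((‖η x‖ : ℂ)) ^ 2 ∂μ = (I : ℂ)) :
    (∫ x, B x / ‖lam - (A x : ℂ)‖ ^ 2 * ‖η x‖ ^ 2 ∂μ = 0) ∧
    (∀ K : ℝ,
      ∫ x, B x * (K - A x) / ‖lam - (A x : ℂ)‖ ^ 2 * ‖η x‖ ^ 2 ∂μ = I) ∧
    0 < μ {x | 0 < B x ∧ η x ≠ 0} ∧ 0 < μ {x | B x < 0 ∧ η x ≠ 0} :=
  rayleigh_fjortoft_necessary_conditions_general μ A B hAmeas hBmeas hBbdd η hη lam hlam I hIneg hI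
end

section
/- Let H be a complex Hilbert space and let A, P : H → H be continuous linear maps with A self-adjoint and P positive (i.e. P is self-adjoint and ⟨Px, x⟩ ≥ 0 for all x ∈ H). Then the spectrum of the composition A ∘ P is contained in the real axis: every λ in the ℂ-spectrum of A ∘ P satisfies Im λ = 0. -/
/-! Write `p = q²` with `q = √p` self-adjoint. Away from `0` the spectra of `(a q) q` and
`q (a q)` agree, and `q a q` is self-adjoint, so its spectrum is real. -/

theorem IsSelfAdjoint.im_eq_zero_of_mem_spectrum_mul_nonneg {A : Type*} [CStarAlgebra A]
    [PartialOrder A] [StarOrderedRing A] {a p : A} (ha : IsSelfAdjoint a) (hp : 0 ≤ p)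
    {z : ℂ} (hz : z ∈ spectrum ℂ (a * p)) : z.im = 0 := by
  obtain rfl | hz0 := eq_or_ne z 0
  · rfl
  set q := CFC.sqrt p
  have hqq : q * q = p := CFC.sqrt_mul_sqrt_self p hp
  have hq : IsSelfAdjoint q := (CFC.sqrt_nonneg p).isSelfAdjoint
  have hconj : IsSelfAdjoint (q * a * q) := by simpa only [hq.star_eq] using ha.conjugate' q
  have hz' : z ∈ spectrum ℂ (a * q * q) \ {0} := ⟨by rwa [mul_assoc, hqq], hz0⟩
  rw [spectrum.nonzero_mul_comm, ← mul_assoc] at hz'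
  exact hconj.im_eq_zero_of_mem_spectrum hz'.1

/-- A composition (self-adjoint) ∘ (positive) of bounded operators on a complex
Hilbert space has real spectrum.  This is the mechanism behind (4.3.11)–(4.3.12),
(4.3.24), Proposition 4.3.5, (5.1.23)–(5.1.24) and (5.1.30)–(5.1.31). -/
theorem spectrum_selfAdjoint_comp_positive_real
    {H : Type*} [NormedAddCommGroup H] [InnerProductSpace ℂ H] [CompleteSpace H]
    (A P : H →L[ℂ] H) (hA : IsSelfAdjoint A) (hP : P.IsPositive) :
    ∀ lam ∈ spectrum ℂ (A ∘L P), lam.im = 0 :=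
  fun _ hlam => hA.im_eq_zero_of_mem_spectrum_mul_nonneg (P.nonneg_iff_isPositive.mpr hP) hlam
end

section
/- Let H be a complex Hilbert space, let S : H → H be a continuous linear self-adjoint map, and let K : H → H be a compact linear map. Then every accumulation point in ℂ of the set (spectrum of S + K) \ (spectrum of S) belongs to the spectrum of S. In particular, the spectrum of S + K outside the spectrum of S is a discrete subset of ℂ \ spectrum(S). -/
/-!
On the resolvent set `ρ(S)` one has `z - (S + K) = (z - S) (1 - R(z) K)` with `R(z) = (z - S)⁻¹`,
so there `σ(S + K)` is the set where `1 - T(z)` fails to be invertible, for the holomorphic family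
of compact operators `T(z) = R(z) K`. Near `z₀`, approximate `T(z₀)` by an operator `F` of finite
rank, factoring through a finite-dimensional subspace `W`; then `B(z) = 1 - (T(z) - F)` is
invertible, `1 - T(z) = B(z) (1 - B(z)⁻¹ F)`, and `1 - B(z)⁻¹ F` is invertible iff the operator
`1 - F B(z)⁻¹` on `W` is, i.e. iff a holomorphic determinant does not vanish. By the identity
theorem, near each point the non-invertibility set either contains a neighbourhood or misses a
punctured one. As `ρ(S)` is connected for self-adjoint `S` and `1 - T(z)` is invertible for
large `|z|`, the second alternative holds everywhere in `ρ(S)`.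
-/

open Filter Topology Metric ContinuousLinearMap

section Algebra

theorem IsUnit.isUnit_sub_iff_one_sub_inverse_mul {R : Type*} [Ring R] {b : R} (hb : IsUnit b)
    (f : R) : IsUnit (b - f) ↔ IsUnit (1 - Ring.inverse b * f) := by
  have hfactor : b - f = b * (1 - Ring.inverse b * f) := by
    rw [mul_sub, mul_one, ← mul_assoc, Ring.mul_inverse_cancel b hb, one_mul]
  rw [hfactor]
  exact hb.unit.isUnit_units_mul _

theorem spectrum.mem_add_iff_not_isUnit_one_sub_resolvent_mul {R A : Type*} [CommSemiring R]
    [Ring A] [Algebra R A] {a b : A} {z : R} (hz : z ∉ spectrum R a) :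
    z ∈ spectrum R (a + b) ↔ ¬IsUnit (1 - resolvent a z * b) := by
  rw [spectrum.mem_iff, ← sub_sub, (spectrum.notMem_iff.mp hz).isUnit_sub_iff_one_sub_inverse_mul]
  rfl

variable {R X Y : Type*} [Ring R]
  [TopologicalSpace X] [AddCommGroup X] [Module R X] [IsTopologicalAddGroup X]
  [TopologicalSpace Y] [AddCommGroup Y] [Module R Y] [IsTopologicalAddGroup Y]

theorem ContinuousLinearMap.isUnit_one_sub_comp_of_isUnit_one_sub_comp {a : Y →L[R] X}
    {b : X →L[R] Y} (h : IsUnit (1 - b ∘L a)) : IsUnit (1 - a ∘L b) := by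
  obtain ⟨u, hu⟩ := h
  let c : Y →L[R] Y := ↑u⁻¹
  have right : (1 - b ∘L a) ∘L c = .id R Y := by rw [← hu]; exact u.mul_inv
  have left : c ∘L (1 - b ∘L a) = .id R Y := by rw [← hu]; exact u.inv_mul
  refine ⟨⟨1 - a ∘L b, 1 + a ∘L c ∘L b, ?_, ?_⟩, rfl⟩
  · calc (1 - a ∘L b) * (1 + a ∘L c ∘L b)
          = 1 - a ∘L b + a ∘L ((1 - b ∘L a) ∘L c) ∘L b := by
            simp only [mul_def, sub_comp, comp_sub, comp_add, comp_assoc, one_def, id_comp,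
              comp_id]
      _ = 1 := by rw [right, id_comp, sub_add_cancel]
  · calc (1 + a ∘L c ∘L b) * (1 - a ∘L b)
          = 1 - a ∘L b + a ∘L (c ∘L (1 - b ∘L a)) ∘L b := by
            simp only [mul_def, sub_comp, comp_sub, add_comp, comp_assoc, one_def, id_comp,
              comp_id]
            abel
      _ = 1 := by rw [left, id_comp, sub_add_cancel]

theorem ContinuousLinearMap.isUnit_one_sub_comp_comm (a : Y →L[R] X) (b : X →L[R] Y) :
    IsUnit (1 - a ∘L b) ↔ IsUnit (1 - b ∘L a) :=
  ⟨isUnit_one_sub_comp_of_isUnit_one_sub_comp, isUnit_one_sub_comp_of_isUnit_one_sub_comp⟩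

end Algebra

section FiniteDimensional

variable {𝕜 W : Type*} [NontriviallyNormedField 𝕜] [CompleteSpace 𝕜]
  [NormedAddCommGroup W] [NormedSpace 𝕜 W] [FiniteDimensional 𝕜 W]

theorem ContinuousLinearMap.isUnit_iff_det_ne_zero (f : W →L[𝕜] W) : IsUnit f ↔ f.det ≠ 0 := by
  rw [← isUnit_iff_ne_zero, ← LinearMap.isUnit_iff_isUnit_det,
    ← MulEquiv.isUnit_map (Module.End.toContinuousLinearMap W)]
  rfl

theorem DifferentiableOn.clm_det {E : Type*} [NormedAddCommGroup E] [NormedSpace 𝕜 E]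
    {f : E → W →L[𝕜] W} {s : Set E} (hf : DifferentiableOn 𝕜 f s) :
    DifferentiableOn 𝕜 (fun x => (f x).det) s := by
  classical
  let b := Module.finBasis 𝕜 W
  have entry : ∀ i j, DifferentiableOn 𝕜 (fun x => LinearMap.toMatrix b b (f x) i j) s :=
    fun i j => by
      simp only [LinearMap.toMatrix_apply]
      exact (LinearMap.toContinuousLinearMap (b.coord i)).differentiable.comp_differentiableOn
        (hf.clm_apply (differentiableOn_const (b j)))
  simp only [ContinuousLinearMap.det, ← LinearMap.det_toMatrix b, Matrix.det_apply']
  refine .fun_sum fun σ _ => .const_mul ?_ _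
  simpa only [Finset.prod_fn] using
    Finset.prod_induction _ (fun g : E → 𝕜 => DifferentiableOn 𝕜 g s) (fun _ _ => .mul)
      (differentiableOn_const 1) fun i _ => entry (σ i) i

end FiniteDimensional

section Hilbert

theorem Submodule.norm_sub_starProjection_le {𝕜 H : Type*} [RCLike 𝕜] [NormedAddCommGroup H]
    [InnerProductSpace 𝕜 H] (W : Submodule 𝕜 H) [W.HasOrthogonalProjection] (x : H) {y : H}
    (hy : y ∈ W) : ‖x - W.starProjection x‖ ≤ ‖x - y‖ := by
  rw [starProjection_minimal]
  exact ciInf_le ⟨0, Set.forall_mem_range.mpr fun _ => norm_nonneg _⟩ (⟨y, hy⟩ : W)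

theorem IsCompactOperator.exists_norm_sub_starProjection_comp_le {𝕜 E H : Type*} [RCLike 𝕜]
    [SeminormedAddCommGroup E] [NormedSpace 𝕜 E] [NormedAddCommGroup H] [InnerProductSpace 𝕜 H]
    {K : E →L[𝕜] H} (hK : IsCompactOperator K) {ε : ℝ} (hε : 0 < ε) :
    ∃ (W : Submodule 𝕜 H) (_ : FiniteDimensional 𝕜 W), ‖K - W.starProjection ∘L K‖ ≤ ε := by
  obtain ⟨t, htf, hcover⟩ := Metric.totallyBounded_iff.mp
    ((hK.isCompact_closure_image_closedBall 1).totallyBounded.subset subset_closure) ε hε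
  have hfin := FiniteDimensional.span_of_finite 𝕜 htf
  refine ⟨Submodule.span 𝕜 t, hfin, opNorm_le_of_unit_norm hε.le fun x hx => ?_⟩
  obtain ⟨y, hyt, hxy⟩ : ∃ y ∈ t, dist (K x) y < ε := by
    simpa using hcover ⟨x, by simp [hx], rfl⟩
  calc ‖(K - (Submodule.span 𝕜 t).starProjection ∘L K) x‖
      ≤ ‖K x - y‖ := (Submodule.span 𝕜 t).norm_sub_starProjection_le _ (Submodule.subset_span hyt)
    _ ≤ ε := by rw [← dist_eq_norm]; exact hxy.le

variable {H : Type*} [NormedAddCommGroup H] [InnerProductSpace ℂ H] [CompleteSpace H]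
  {T : ℂ → H →L[ℂ] H}

theorem IsCompactOperator.exists_analyticAt_isUnit_one_sub_iff {s : Set ℂ} {z₀ : ℂ}
    (hT : DifferentiableOn ℂ T s) (hs : s ∈ 𝓝 z₀) (hK : IsCompactOperator (T z₀)) :
    ∃ d : ℂ → ℂ, AnalyticAt ℂ d z₀ ∧ ∀ᶠ z in 𝓝 z₀, (IsUnit (1 - T z) ↔ d z ≠ 0) := by
  obtain ⟨W, _, hW⟩ := hK.exists_norm_sub_starProjection_comp_le (half_pos one_pos)
  let F' : H →L[ℂ] W := W.orthogonalProjectionOnto ∘L T z₀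
  let B : ℂ → H →L[ℂ] H := fun z => 1 - (T z - W.subtypeL ∘L F')
  have hB : ∀ᶠ z in 𝓝 z₀, z ∈ s ∧ IsUnit (B z) := by
    have hclose : ∀ᶠ z in 𝓝 z₀, dist (T z) (T z₀) < 1 / 2 :=
      tendsto_nhds.mp (hT.continuousOn.continuousAt hs) _ one_half_pos
    filter_upwards [hs, hclose] with z hzs hz
    refine ⟨hzs, isUnit_one_sub_of_norm_lt_one ?_⟩
    calc ‖T z - W.subtypeL ∘L F'‖ ≤ ‖T z - T z₀‖ + ‖T z₀ - W.starProjection ∘L T z₀‖ :=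
          norm_sub_le_norm_sub_add_norm_sub _ _ _
      _ < 1 := by rw [← dist_eq_norm]; linarith
  let d : ℂ → ℂ := fun z => (1 - F' ∘L Ring.inverse (B z) ∘L W.subtypeL).det
  refine ⟨d, DifferentiableOn.analyticAt (s := {z | z ∈ s ∧ IsUnit (B z)}) ?_ hB, ?_⟩
  · have hBinv : DifferentiableOn ℂ (fun z => Ring.inverse (B z)) {z | z ∈ s ∧ IsUnit (B z)} :=
      ((differentiableOn_const _).sub ((hT.mono fun _ h => h.1).sub_const _)).inverse
        fun _ h => h.2
    exact ((differentiableOn_const _).sub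
      ((differentiableOn_const _).clm_comp (hBinv.clm_comp (differentiableOn_const _)))).clm_det
  · filter_upwards [hB] with z ⟨_, hBz⟩
    calc IsUnit (1 - T z) ↔ IsUnit (B z - W.subtypeL ∘L F') := by
          simp only [B, sub_sub, sub_add_cancel]
      _ ↔ IsUnit (1 - (Ring.inverse (B z) ∘L W.subtypeL) ∘L F') :=
          hBz.isUnit_sub_iff_one_sub_inverse_mul _
      _ ↔ d z ≠ 0 := by rw [isUnit_one_sub_comp_comm, isUnit_iff_det_ne_zero]

theorem IsCompactOperator.eventually_not_isUnit_one_sub_or_eventually_isUnit_one_sub {s : Set ℂ}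
    {z₀ : ℂ} (hT : DifferentiableOn ℂ T s) (hs : s ∈ 𝓝 z₀) (hK : IsCompactOperator (T z₀)) :
    (∀ᶠ z in 𝓝 z₀, ¬IsUnit (1 - T z)) ∨ ∀ᶠ z in 𝓝[≠] z₀, IsUnit (1 - T z) := by
  obtain ⟨d, hd, hdT⟩ := hK.exists_analyticAt_isUnit_one_sub_iff hT hs
  refine hd.eventually_eq_zero_or_eventually_ne_zero.imp (fun h => ?_) (fun h => ?_)
  · filter_upwards [h, hdT] with z hz hzT
    rwa [hzT, not_not]
  · filter_upwards [h, eventually_nhdsWithin_of_eventually_nhds hdT] with z hz hzT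
    exact hzT.mpr hz

theorem IsPreconnected.eventually_isUnit_one_sub_of_isCompactOperator {U : Set ℂ}
    (hU : IsPreconnected U) (hUo : IsOpen U) (hT : DifferentiableOn ℂ T U)
    (hK : ∀ z ∈ U, IsCompactOperator (T z)) {z₁ : ℂ} (hz₁ : z₁ ∈ U) (hunit : IsUnit (1 - T z₁)) :
    ∀ z ∈ U, ∀ᶠ w in 𝓝[≠] z, IsUnit (1 - T w) := by
  let A := {z | ∀ᶠ w in 𝓝 z, ¬IsUnit (1 - T w)}
  have dichotomy : ∀ z ∈ U, z ∈ A ∨ ∀ᶠ w in 𝓝[≠] z, IsUnit (1 - T w) := fun z hz =>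
    (hK z hz).eventually_not_isUnit_one_sub_or_eventually_isUnit_one_sub hT (hUo.mem_nhds hz)
  have hclosed : closure A ∩ U ⊆ A := by
    rintro z ⟨hzA, hzU⟩
    obtain hA | hpunctured := dichotomy z hzU
    · exact hA
    obtain ⟨w, hwA, hw⟩ := ((mem_closure_iff_frequently.mp hzA).and_eventually
      (eventually_nhdsWithin_iff.mp hpunctured)).exists
    by_cases hwz : w = z
    · exact hwz ▸ hwA
    · exact absurd (hw hwz) hwA.self_of_nhds
  have hdisjoint : U ∩ A = ∅ := by
    by_contra hne
    exact (hU.subset_of_closure_inter_subset isOpen_setOfPred_eventually_nhds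
      (Set.nonempty_iff_ne_empty.mpr hne) hclosed hz₁).self_of_nhds hunit
  exact fun z hz => (dichotomy z hz).resolve_left fun hzA => hdisjoint.subset ⟨hz, hzA⟩

end Hilbert

/-- Accumulation statement in Propositions 4.2.1 and 4.3.1: for a bounded self-adjoint
operator `S` and a compact operator `K` on a complex Hilbert space, every accumulation
point of `spectrum(S+K) \ spectrum(S)` lies in `spectrum(S)`; in particular
`spectrum(S+K) \ spectrum(S)` is discrete. -/
theorem accPt_spectrum_compact_perturbation_mem_spectrum
    {H : Type*} [NormedAddCommGroup H] [InnerProductSpace ℂ H] [CompleteSpace H]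
    (S K : H →L[ℂ] H) (hS : IsSelfAdjoint S) (hK : IsCompactOperator (⇑K)) :
    (∀ z : ℂ, AccPt z (Filter.principal (spectrum ℂ (S + K) \ spectrum ℂ S)) →
      z ∈ spectrum ℂ S) ∧
    DiscreteTopology ↥(spectrum ℂ (S + K) \ spectrum ℂ S) := by
  have hmem : ∀ z ∉ spectrum ℂ S, z ∈ spectrum ℂ (S + K) ↔ ¬IsUnit (1 - resolvent S z * K) :=
    fun _ => spectrum.mem_add_iff_not_isUnit_one_sub_resolvent_mul
  have hT : DifferentiableOn ℂ (fun z => resolvent S z * K) (spectrum ℂ S)ᶜ := fun z hz =>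
    have hR := spectrum.hasDerivAt_resolvent_const_left (spectrum.notMem_iff.mp hz)
    (hR.differentiableAt.mul_const K).differentiableWithinAt
  obtain ⟨z₁, hz₁S, hz₁SK⟩ : ((spectrum ℂ S)ᶜ ∩ (spectrum ℂ (S + K))ᶜ).Nonempty := by
    rw [← Set.compl_union]
    exact nonempty_of_mem (Bornology.isBounded_def.mp
      ((spectrum.isBounded (𝕜 := ℂ) S).union (spectrum.isBounded (S + K))))
  have hunit := IsPreconnected.eventually_isUnit_one_sub_of_isCompactOperator
    hS.isConnected_spectrum_compl.isPreconnected (spectrum.isClosed S).isOpen_compl hT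
    (fun z _ => hK.clm_comp (resolvent S z)) hz₁S (not_not.mp (mt (hmem z₁ hz₁S).mpr hz₁SK))
  have hnotAcc : ∀ z ∉ spectrum ℂ S, ¬AccPt z (𝓟 (spectrum ℂ (S + K) \ spectrum ℂ S)) := by
    intro z hz hacc
    obtain ⟨w, ⟨hwSK, hwS⟩, hw⟩ :=
      ((accPt_iff_frequently_nhdsNE.mp hacc).and_eventually (hunit z hz)).exists
    exact (hmem w hwS).mp hwSK hw
  exact ⟨fun z hz => not_not.mp fun h => hnotAcc z h hz,
    discreteTopology_subtype_iff.mpr fun z hz => not_neBot.mp (hnotAcc z hz.2)⟩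
end

section
/- Let H be a complex Hilbert space, let S : H → H be a continuous linear self-adjoint map, and let K : H → H be a compact linear map. If the ℂ-spectrum of S + K is not contained in the real axis, then S + K has a non-real eigenvalue: there exist λ ∈ ℂ with Im λ ≠ 0 and a nonzero v ∈ H such that (S + K)v = λv. -/
open Filter Topology

/-- Resolvent norm lower bound near a spectrum point. -/
lemma aux_resolvent_lower {H : Type*} [NormedAddCommGroup H] [InnerProductSpace ℂ H]
    [CompleteSpace H] (T : H →L[ℂ] H) {lam0 mu : ℂ} (h0 : lam0 ∈ spectrum ℂ T)
    (hmu : IsUnit (algebraMap ℂ (H →L[ℂ] H) mu - T)) :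
    1 ≤ ‖mu - lam0‖ * ‖(↑hmu.unit⁻¹ : H →L[ℂ] H)‖ := by
  by_contra hlt
  push_neg at hlt
  set R : H →L[ℂ] H := ↑hmu.unit⁻¹
  have hx : ‖(mu - lam0) • R‖ < 1 :=
    lt_of_le_of_lt (norm_smul_le _ _) hlt
  have hunit2 : IsUnit ((1 : H →L[ℂ] H) - (mu - lam0) • R) := (Units.oneSub _ hx).isUnit
  have key : algebraMap ℂ (H →L[ℂ] H) lam0 - T
      = (algebraMap ℂ (H →L[ℂ] H) mu - T) * ((1 : H →L[ℂ] H) - (mu - lam0) • R) := by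
    have hmul : (algebraMap ℂ (H →L[ℂ] H) mu - T) * R = 1 := by
      rw [show (algebraMap ℂ (H →L[ℂ] H) mu - T) = ↑hmu.unit from hmu.unit_spec.symm]
      exact hmu.unit.mul_inv
    rw [mul_sub, mul_one, mul_smul_comm, hmul, Algebra.algebraMap_eq_smul_one,
      Algebra.algebraMap_eq_smul_one, sub_smul]
    abel
  exact (spectrum.notMem_iff.mpr (key ▸ hmu.mul hunit2)) h0


/-- Abstract content of Corollaries 4.2.2 and 4.3.2: if the spectrum of `S + K`
(`S` bounded self-adjoint, `K` compact, on a complex Hilbert space) is not contained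
in the real axis, then `S + K` has a genuine non-real eigenvalue. -/
theorem nonreal_eigenvalue_of_spectrum_not_real
    {H : Type*} [NormedAddCommGroup H] [InnerProductSpace ℂ H] [CompleteSpace H]
    (S K : H →L[ℂ] H) (hS : IsSelfAdjoint S) (hK : IsCompactOperator (⇑K))
    (hspec : ¬ (spectrum ℂ (S + K) ⊆ {z : ℂ | z.im = 0})) :
    ∃ lam : ℂ, lam.im ≠ 0 ∧ ∃ v : H, v ≠ 0 ∧ (S + K) v = lam • v := by
  classical
  obtain ⟨z, hz, hzim⟩ := Set.not_subset.mp hspec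
  simp only [Set.mem_setOf_eq] at hzim
  have hσc : IsCompact (spectrum ℂ (S + K)) := spectrum.isCompact (S + K)
  obtain ⟨lam0, hlam0σ, hmax⟩ := hσc.exists_isMaxOn ⟨z, hz⟩
    (Continuous.continuousOn (by continuity : Continuous (fun w : ℂ => |w.im|)))
  have hlam0im : lam0.im ≠ 0 := by
    intro h
    have := hmax hz
    simp only [h, abs_zero] at this
    exact hzim (abs_eq_zero.mp (le_antisymm this (abs_nonneg _)))
  -- sign
  obtain ⟨s, hs1, hsgt⟩ : ∃ s : ℝ, |s| = 1 ∧ ∀ t : ℝ, 0 < t → |lam0.im| < |lam0.im + s * t| := by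
    rcases hlam0im.lt_or_gt with hneg | hpos
    · exact ⟨-1, by norm_num, fun t ht => by
        rw [abs_of_neg hneg, abs_of_neg (by nlinarith)]; nlinarith⟩
    · exact ⟨1, by norm_num, fun t ht => by
        rw [abs_of_pos hpos, abs_of_pos (by nlinarith)]; nlinarith⟩
  set lam : ℕ → ℂ := fun n => lam0 + (s / (n + 2) : ℝ) * Complex.I with hlam
  have hden : ∀ n : ℕ, (0:ℝ) < (n:ℝ) + 2 := fun n => by positivity
  have him : ∀ n, (lam n).im = lam0.im + s / (n + 2) := fun n => by
    show (lam0 + ((s / ((n:ℝ) + 2) : ℝ) : ℂ) * Complex.I).im = _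
    rw [Complex.add_im, Complex.mul_I_im, Complex.ofReal_re]
  have hdist : ∀ n, ‖lam n - lam0‖ = 1 / ((n:ℝ) + 2) := fun n => by
    have : lam n - lam0 = ((s / ((n:ℝ) + 2) : ℝ) : ℂ) * Complex.I := by
      show lam0 + _ - lam0 = _
      ring
    rw [this, norm_mul, Complex.norm_real, Complex.norm_I, mul_one, Real.norm_eq_abs,
      abs_div, hs1, abs_of_pos (hden n)]
  have hnotmem : ∀ n, lam n ∉ spectrum ℂ (S + K) := by
    intro n hmem
    have h1 : |(lam n).im| ≤ |lam0.im| := hmax hmem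
    have h2 := hsgt (1 / ((n:ℝ) + 2)) (by positivity)
    rw [him n] at h1
    rw [div_eq_mul_one_div s] at h1
    exact absurd h1 (not_le.mpr h2)
  -- approximate eigenvectors
  have key : ∀ n : ℕ, ∃ v : H, ‖v‖ = 1 ∧
      ‖lam n • v - (S + K) v‖ ≤ 1 / ((n:ℝ) + 1) := by
    intro n
    have hU : IsUnit (algebraMap ℂ (H →L[ℂ] H) (lam n) - (S + K)) :=
      spectrum.notMem_iff.mp (hnotmem n)
    set R : H →L[ℂ] H := ↑hU.unit⁻¹ with hR
    have hRnorm : (n:ℝ) + 2 ≤ ‖R‖ := by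
      have h1 := aux_resolvent_lower (S + K) hlam0σ hU
      rw [hdist n] at h1
      rw [div_mul_eq_mul_div, one_mul, le_div_iff₀ (hden n)] at h1
      linarith
    obtain ⟨u, hu1, hu2⟩ := R.exists_lt_apply_of_lt_opNorm
      (show ((n:ℝ) + 1) < ‖R‖ by linarith)
    have hRu0 : (0:ℝ) < ‖R u‖ := lt_of_le_of_lt (by positivity) hu2
    refine ⟨((‖R u‖⁻¹ : ℝ) : ℂ) • R u, ?_, ?_⟩
    · rw [norm_smul, Complex.norm_real, Real.norm_eq_abs, abs_inv, abs_norm,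
        inv_mul_cancel₀ hRu0.ne']
    · have happ : (algebraMap ℂ (H →L[ℂ] H) (lam n) - (S + K)) (R u) = u := by
        have hmul : (algebraMap ℂ (H →L[ℂ] H) (lam n) - (S + K)) * R = 1 := by
          rw [show (algebraMap ℂ (H →L[ℂ] H) (lam n) - (S + K)) = ↑hU.unit from
            hU.unit_spec.symm]
          exact hU.unit.mul_inv
        calc (algebraMap ℂ (H →L[ℂ] H) (lam n) - (S + K)) (R u)
            = ((algebraMap ℂ (H →L[ℂ] H) (lam n) - (S + K)) * R) u := rfl
          _ = u := by rw [hmul]; rfl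
      have hformula : ∀ w : H,
          (algebraMap ℂ (H →L[ℂ] H) (lam n) - (S + K)) w = lam n • w - (S + K) w := by
        intro w
        simp [Algebra.algebraMap_eq_smul_one]
      have hmap : (algebraMap ℂ (H →L[ℂ] H) (lam n) - (S + K))
          (((‖R u‖⁻¹ : ℝ) : ℂ) • R u) = ((‖R u‖⁻¹ : ℝ) : ℂ) • u := by
        rw [map_smul, happ]
      rw [← hformula, hmap, norm_smul, Complex.norm_real, Real.norm_eq_abs, abs_inv, abs_norm]
      calc ‖R u‖⁻¹ * ‖u‖ ≤ ‖R u‖⁻¹ * 1 := by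
            exact mul_le_mul_of_nonneg_left hu1.le (by positivity)
        _ ≤ 1 / ((n:ℝ) + 1) := by
            rw [mul_one, one_div]
            exact inv_anti₀ (by positivity) hu2.le
  choose v hv1 hv2 using key
  -- limits
  have t1 : Tendsto (fun n => lam n • v n - (S + K) (v n)) atTop (𝓝 0) :=
    squeeze_zero_norm hv2 tendsto_one_div_add_atTop_nhds_zero_nat
  have t2 : Tendsto (fun n => (lam0 - lam n) • v n) atTop (𝓝 0) := by
    apply squeeze_zero_norm (fun n => ?_) tendsto_one_div_add_atTop_nhds_zero_nat
    rw [norm_smul, hv1 n, mul_one, norm_sub_rev, hdist n]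
    apply div_le_div_of_nonneg_left one_pos.le (by positivity) (by linarith)
  -- compactness
  obtain ⟨C, hCc, hCsub⟩ := IsCompactOperator.image_subset_compact_of_bounded
    (f := (K : H →ₗ[ℂ] H)) hK (Metric.isBounded_closedBall (x := (0:H)) (r := 1))
  have hvC : ∀ n, K (v n) ∈ C := fun n =>
    hCsub ⟨v n, by simp [Metric.mem_closedBall, hv1 n], rfl⟩
  obtain ⟨y, -, φ, hφ, t3⟩ := hCc.tendsto_subseq hvC
  -- S - lam0 invertible
  have hU0 : IsUnit (algebraMap ℂ (H →L[ℂ] H) lam0 - S) :=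
    spectrum.notMem_iff.mp (fun hmem => hlam0im (hS.im_eq_zero_of_mem_spectrum hmem))
  set R0 : H →L[ℂ] H := ↑hU0.unit⁻¹ with hR0
  have hSv : Tendsto (fun k => lam0 • v (φ k) - S (v (φ k))) atTop (𝓝 y) := by
    have := ((t2.comp hφ.tendsto_atTop).add ((t1.comp hφ.tendsto_atTop).add t3))
    rw [zero_add, zero_add] at this
    refine this.congr fun k => ?_
    simp only [Function.comp_apply, ContinuousLinearMap.add_apply]
    module
  have hR0app : ∀ w : H, R0 (lam0 • w - S w) = w := by
    intro w
    have hformula : lam0 • w - S w = (algebraMap ℂ (H →L[ℂ] H) lam0 - S) w := by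
      simp [Algebra.algebraMap_eq_smul_one]
    have hmul : R0 * (algebraMap ℂ (H →L[ℂ] H) lam0 - S) = 1 := by
      rw [show (algebraMap ℂ (H →L[ℂ] H) lam0 - S) = ↑hU0.unit from hU0.unit_spec.symm]
      exact hU0.unit.inv_mul
    calc R0 (lam0 • w - S w) = (R0 * (algebraMap ℂ (H →L[ℂ] H) lam0 - S)) w := by
          rw [hformula]; rfl
      _ = w := by rw [hmul]; rfl
  have tv : Tendsto (fun k => v (φ k)) atTop (𝓝 (R0 y)) := by
    have := (R0.continuous.tendsto y).comp hSv
    exact this.congr fun k => hR0app _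
  refine ⟨lam0, hlam0im, R0 y, ?_, ?_⟩
  · have hnorm1 : ‖R0 y‖ = 1 := by
      refine tendsto_nhds_unique (tv.norm) ?_
      exact tendsto_const_nhds.congr fun k => (hv1 (φ k)).symm
    intro h0
    rw [h0, norm_zero] at hnorm1
    norm_num at hnorm1
  · have tA : Tendsto (fun k => lam0 • v (φ k) - (S + K) (v (φ k))) atTop
        (𝓝 (lam0 • R0 y - (S + K) (R0 y))) :=
      (tv.const_smul lam0).sub (((S + K).continuous.tendsto _).comp tv)
    have tB : Tendsto (fun k => lam0 • v (φ k) - (S + K) (v (φ k))) atTop (𝓝 0) := by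
      have := (t2.comp hφ.tendsto_atTop).add (t1.comp hφ.tendsto_atTop)
      rw [zero_add] at this
      refine this.congr fun k => ?_
      simp only [Function.comp_apply]
      module
    have := tendsto_nhds_unique tA tB
    rw [sub_eq_zero] at this
    exact this.symm
end

section
/- Let a > 0, T > 0, and let y : [0, T] → ℝ be differentiable with y(t) ≥ 1 for all t ∈ [0, T], satisfying the differential inequality y'(t) ≤ a·(1 + log y(t))·y(t) for all t ∈ [0, T]. Then for every t ∈ [0, T], y(t) ≤ exp( (1 + log y(0))·exp(a t) − 1 ). -/
open Real Set

/-- Double-exponential Gronwall-type lemma at the core of the Beale–Kato–Majda argument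
in Section 2.3 (equations (2.3.9)–(2.3.15)): if `y ≥ 1` satisfies
`y' ≤ a (1 + log y) y` on `[0, T]`, then `y(t) ≤ exp((1 + log y(0)) exp(a t) − 1)`. -/
theorem gronwall_log_double_exponential
    (a T : ℝ) (ha : 0 < a) (hT : 0 < T) (y y' : ℝ → ℝ)
    (hderiv : ∀ t ∈ Set.Icc 0 T, HasDerivWithinAt y (y' t) (Set.Icc 0 T) t)
    (hy1 : ∀ t ∈ Set.Icc 0 T, 1 ≤ y t)
    (hineq : ∀ t ∈ Set.Icc 0 T, y' t ≤ a * (1 + Real.log (y t)) * y t) :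
    ∀ t ∈ Set.Icc 0 T, y t ≤ Real.exp ((1 + Real.log (y 0)) * Real.exp (a * t) - 1) := by
  -- Auxiliary facts
  have hypos : ∀ t ∈ Set.Icc 0 T, (0:ℝ) < y t := fun t ht =>
    lt_of_lt_of_le one_pos (hy1 t ht)
  have hz1 : ∀ t ∈ Set.Icc 0 T, (1:ℝ) ≤ 1 + Real.log (y t) := by
    intro t ht
    have : 0 ≤ Real.log (y t) := Real.log_nonneg (hy1 t ht)
    linarith
  have hzpos : ∀ t ∈ Set.Icc 0 T, (0:ℝ) < 1 + Real.log (y t) := fun t ht =>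
    lt_of_lt_of_le one_pos (hz1 t ht)
  set g : ℝ → ℝ := fun t => Real.log (1 + Real.log (y t)) - a * t with hg
  have hgderiv : ∀ t ∈ Set.Icc 0 T,
      HasDerivWithinAt g (y' t / y t / (1 + Real.log (y t)) - a) (Set.Icc 0 T) t := by
    intro t ht
    have h1 : HasDerivWithinAt (fun s => Real.log (y s)) (y' t / y t) (Set.Icc 0 T) t :=
      (hderiv t ht).log (ne_of_gt (hypos t ht))
    have h2 : HasDerivWithinAt (fun s => 1 + Real.log (y s)) (y' t / y t) (Set.Icc 0 T) t :=
      h1.const_add 1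
    have h3 : HasDerivWithinAt (fun s => Real.log (1 + Real.log (y s)))
        (y' t / y t / (1 + Real.log (y t))) (Set.Icc 0 T) t :=
      h2.log (ne_of_gt (hzpos t ht))
    have h4 : HasDerivWithinAt (fun s : ℝ => a * s) a (Set.Icc 0 T) t := by
      simpa using ((hasDerivAt_id t).const_mul a).hasDerivWithinAt
    exact h3.sub h4
  have hgcont : ContinuousOn g (Set.Icc 0 T) := fun t ht =>
    (hgderiv t ht).continuousWithinAt
  have hanti : AntitoneOn g (Set.Icc 0 T) := by
    apply antitoneOn_of_deriv_nonpos (convex_Icc 0 T) hgcont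
    · intro x hx
      rw [interior_Icc] at hx
      have hx' : x ∈ Set.Icc 0 T := Ioo_subset_Icc_self hx
      exact ((hgderiv x hx').hasDerivAt (Icc_mem_nhds hx.1 hx.2)).differentiableAt.differentiableWithinAt
    · intro x hx
      rw [interior_Icc] at hx
      have hx' : x ∈ Set.Icc 0 T := Ioo_subset_Icc_self hx
      have hd := ((hgderiv x hx').hasDerivAt (Icc_mem_nhds hx.1 hx.2)).deriv
      rw [hd]
      have hyp := hypos x hx'
      have hzp := hzpos x hx'
      have h1 : y' x / y x ≤ a * (1 + Real.log (y x)) := by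
        rw [div_le_iff₀ hyp]
        simpa [mul_assoc] using hineq x hx'
      have h2 : y' x / y x / (1 + Real.log (y x)) ≤ a := by
        rw [div_le_iff₀ hzp]
        linarith [h1]
      linarith
  -- Conclude
  intro t ht
  have h0 : (0:ℝ) ∈ Set.Icc 0 T := ⟨le_refl 0, le_of_lt hT⟩
  have hgle : g t ≤ g 0 := hanti h0 ht ht.1
  have hlog : Real.log (1 + Real.log (y t)) ≤ Real.log (1 + Real.log (y 0)) + a * t := by
    simp only [hg, mul_zero, sub_zero] at hgle
    linarith
  have hz : 1 + Real.log (y t) ≤ (1 + Real.log (y 0)) * Real.exp (a * t) := by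
    have := Real.exp_le_exp.mpr hlog
    rwa [Real.exp_log (hzpos t ht), Real.exp_add, Real.exp_log (hzpos 0 h0)] at this
  have : Real.log (y t) ≤ (1 + Real.log (y 0)) * Real.exp (a * t) - 1 := by linarith
  calc y t = Real.exp (Real.log (y t)) := (Real.exp_log (hypos t ht)).symm
    _ ≤ Real.exp ((1 + Real.log (y 0)) * Real.exp (a * t) - 1) := Real.exp_le_exp.mpr this
end

section
/- For every integer ℓ ≥ 2 and every t ∈ [−1, 1], t·η_ℓ(t) = b_ℓ·η_{ℓ−1}(t) + b_{ℓ+1}·η_{ℓ+1}(t), where η_ℓ(t) = √( (2ℓ+1) / (2(ℓ+2)(ℓ+1)ℓ(ℓ−1)) ) · (1 − t²) · P''_ℓ(t) for ℓ ≥ 2, η₁ := 0, and b_ℓ = √( (ℓ+2)(ℓ−2) / ((2ℓ+1)(2ℓ−1)) ) for ℓ ≥ 2. -/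
open Real

/-- The Legendre polynomial `P_ℓ`, via the Rodrigues formula
`P_ℓ(t) = 1/(2^ℓ ℓ!) (d/dt)^ℓ (t² − 1)^ℓ`. -/
noncomputable def legendre (ℓ : ℕ) (t : ℝ) : ℝ :=
  (1 / (2 ^ ℓ * (Nat.factorial ℓ : ℝ))) * iteratedDeriv ℓ (fun s : ℝ => (s ^ 2 - 1) ^ ℓ) t

/-- The normalized associated Legendre function of order 2:
`η_ℓ(t) = √((2ℓ+1)/(2(ℓ+2)(ℓ+1)ℓ(ℓ−1))) (1−t²) P''_ℓ(t)` for `ℓ ≥ 2`, with `η_ℓ := 0`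
for `ℓ < 2`. -/
noncomputable def eta (ℓ : ℕ) (t : ℝ) : ℝ :=
  if ℓ < 2 then 0 else
    Real.sqrt ((2 * (ℓ : ℝ) + 1) /
        (2 * ((ℓ : ℝ) + 2) * ((ℓ : ℝ) + 1) * (ℓ : ℝ) * ((ℓ : ℝ) - 1))) *
      (1 - t ^ 2) * iteratedDeriv 2 (legendre ℓ) t

/-- The coefficient `b_ℓ = √((ℓ+2)(ℓ−2)/((2ℓ+1)(2ℓ−1)))` for `ℓ ≥ 2`. -/
noncomputable def bCoef (ℓ : ℕ) : ℝ :=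
  Real.sqrt ((((ℓ : ℝ) + 2) * ((ℓ : ℝ) - 2)) / ((2 * (ℓ : ℝ) + 1) * (2 * (ℓ : ℝ) - 1)))

namespace EtaRec
open Polynomial

/- ### Polynomial layer -/

lemma iterD_shift (n : ℕ) (h : Polynomial ℝ) :
    derivative^[n] (derivative h) = derivative^[n+1] h :=
  (Function.iterate_succ_apply derivative n h).symm

lemma iterD_add (n : ℕ) (p q : Polynomial ℝ) :
    derivative^[n] (p + q) = derivative^[n] p + derivative^[n] q := by
  induction n generalizing p q with
  | zero => simp
  | succ n ih =>
    rw [Function.iterate_succ_apply, derivative_add, ih, iterD_shift, iterD_shift]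

lemma L1 (n : ℕ) (h : Polynomial ℝ) :
    derivative^[n+1] (X * h) = X * derivative^[n+1] h + ((n:ℝ[X])+1) * derivative^[n] h := by
  induction n generalizing h with
  | zero => simp [derivative_mul]; ring
  | succ n ih =>
    rw [Function.iterate_succ_apply, derivative_mul, derivative_X, one_mul, iterD_add, ih,
      iterD_shift, iterD_shift]
    push_cast
    ring_nf

lemma L2 (n : ℕ) (h : Polynomial ℝ) :
    derivative^[n+1] ((X^2 - 1) * h) = (X^2 - 1) * derivative^[n+1] h
      + (2*((n:ℝ[X])+1)) * X * derivative^[n] h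
      + (((n:ℝ[X])+1)*(n:ℝ[X])) * derivative^[n-1] h := by
  induction n generalizing h with
  | zero =>
    simp only [Nat.cast_zero, zero_add, mul_one, Nat.zero_sub, Function.iterate_one]
    rw [derivative_mul]
    simp only [derivative_sub, derivative_X_pow, derivative_one, Function.iterate_zero, id_eq,
      C_eq_natCast, map_add, map_one]
    push_cast
    ring
  | succ n ih =>
    have hd : derivative ((X^2 - 1) * h) = (2:ℝ[X]) * X * h + (X^2-1) * derivative h := by
      rw [derivative_mul]
      simp only [derivative_sub, derivative_X_pow, derivative_one, C_eq_natCast, map_add, map_one]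
      push_cast
      ring
    rw [Function.iterate_succ_apply, hd, iterD_add, ih]
    have h2 : derivative^[n+1] ((2:ℝ[X]) * X * h)
        = 2 * (X * derivative^[n+1] h + ((n:ℝ[X])+1) * derivative^[n] h) := by
      have e : (2 : ℝ[X]) * X * h = ((2:ℕ) : ℝ[X]) * (X * h) := by push_cast; ring
      rw [e, iterate_derivative_natCast_mul, L1]; push_cast; ring
    rw [h2, iterD_shift, iterD_shift]
    have h3 : (((n:ℝ[X])+1)*(n:ℝ[X])) * derivative^[n-1] (derivative h)
        = (((n:ℝ[X])+1)*(n:ℝ[X])) * derivative^[n] h := by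
      cases n with
      | zero => push_cast; ring_nf
      | succ n => rw [iterD_shift]; norm_num
    rw [h3]
    push_cast
    ring_nf

lemma fder (k : ℕ) : derivative ((X^2 - 1 : ℝ[X])^(k+1))
    = ((2*(k+1) : ℕ) : ℝ[X]) * (X * (X^2-1)^k) := by
  rw [derivative_pow_succ]
  simp only [derivative_sub, derivative_X_pow, derivative_one, C_eq_natCast, map_add, map_one]
  push_cast
  ring

lemma gsucc (k j : ℕ) : derivative^[j+2] ((X^2-1 : ℝ[X])^(k+1))
    = ((2*(k+1) : ℕ) : ℝ[X]) * (X * derivative^[j+1] ((X^2-1)^k)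
        + ((j:ℝ[X])+1) * derivative^[j] ((X^2-1)^k)) := by
  rw [show (j:ℕ)+2 = (j+1)+1 from rfl, Function.iterate_succ_apply, fder,
    iterate_derivative_natCast_mul, L1]

lemma ode (m : ℕ) :
    (X^2-1) * derivative^[m+3] ((X^2-1 : ℝ[X])^(m+1))
      + 2*X*derivative^[m+2] ((X^2-1 : ℝ[X])^(m+1))
    = (((m:ℝ[X])+1)*((m:ℝ[X])+2)) * derivative^[m+1] ((X^2-1 : ℝ[X])^(m+1)) := by
  have R : (X^2-1) * derivative ((X^2-1 : ℝ[X])^(m+1))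
      = ((2*(m+1) : ℕ) : ℝ[X]) * (X * (X^2-1)^(m+1)) := by
    rw [fder, show ((m:ℕ)+1) = m+1 from rfl]
    push_cast
    ring
  have h1 := congrArg (derivative^[m+2]) R
  rw [show (m:ℕ)+2 = (m+1)+1 from rfl, L2, iterate_derivative_natCast_mul, L1,
    iterD_shift, iterD_shift, Nat.add_sub_cancel, iterD_shift] at h1
  push_cast at h1 ⊢
  linear_combination h1

lemma key (m : ℕ) :
    (2*((m:ℝ[X])+3)*(2*(m:ℝ[X])+5)) * X * derivative^[m+4] ((X^2-1 : ℝ[X])^(m+2))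
    = (4*((m:ℝ[X])+2)*((m:ℝ[X])+3)*((m:ℝ[X])+4)) * derivative^[m+3] ((X^2-1 : ℝ[X])^(m+1))
      + ((m:ℝ[X])+1) * derivative^[m+5] ((X^2-1 : ℝ[X])^(m+3)) := by
  have e1 := gsucc (m+1) (m+2)
  have e2 := gsucc (m+2) (m+3)
  have e3 := gsucc (m+1) (m+1)
  have e4 := ode m
  rw [show (m:ℕ)+1+2 = (m+1)+2 from rfl] at e3
  rw [show (m:ℕ)+2+2 = (m+2)+2 from rfl, show (m:ℕ)+3+1 = m+4 from rfl,
    show (m:ℕ)+3+2 = (m+3)+2 from rfl] at e2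
  rw [e3] at e2
  rw [show (m:ℕ)+2+2 = m+4 from rfl, show (m:ℕ)+2+1 = m+3 from rfl,
    show (m:ℕ)+1+1 = m+2 from rfl] at e1
  rw [e1] at e2
  rw [show (m:ℕ)+4 = (m+2)+2 from rfl, show (m:ℕ)+5 = (m+3)+2 from rfl, e1, e2]
  push_cast at e4 ⊢
  linear_combination (4*((m:ℝ[X])+2)*((m:ℝ[X])+3)*((m:ℝ[X])+4)) * e4

/- ### Evaluation layer -/

lemma iteratedDeriv_eval (n : ℕ) (p : Polynomial ℝ) :
    iteratedDeriv n (fun x : ℝ => p.eval x) = fun x => (derivative^[n] p).eval x := by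
  induction n generalizing p with
  | zero => simp
  | succ n ih =>
    rw [iteratedDeriv_succ']
    have : deriv (fun x : ℝ => p.eval x) = fun x => (derivative p).eval x := by
      funext x; exact Polynomial.deriv (p := p)
    rw [this, ih, Function.iterate_succ_apply]

lemma legendre_eq (j : ℕ) : legendre j
    = fun t => Polynomial.eval t (C (1/(2^j * (Nat.factorial j : ℝ))) * derivative^[j] ((X^2-1)^j)) := by
  funext t
  unfold legendre
  have hfun : (fun s : ℝ => (s ^ 2 - 1) ^ j) = fun s => Polynomial.eval s ((X^2-1 : ℝ[X])^j) := by
    funext s; simp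
  rw [hfun, iteratedDeriv_eval, eval_C_mul]

lemma d2_eq (j : ℕ) (t : ℝ) : iteratedDeriv 2 (legendre j) t
    = (1/(2^j * (Nat.factorial j : ℝ))) * Polynomial.eval t (derivative^[j+2] ((X^2-1)^j)) := by
  rw [legendre_eq, iteratedDeriv_eval, iterate_derivative_C_mul]
  show Polynomial.eval t (C _ * _) = _
  rw [eval_C_mul, ← Function.iterate_add_apply, Nat.add_comm 2 j]

lemma eval_eq (j : ℕ) (t : ℝ) : Polynomial.eval t (derivative^[j+2] ((X^2-1 : ℝ[X])^j))
    = 2^j * (Nat.factorial j : ℝ) * iteratedDeriv 2 (legendre j) t := by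
  rw [d2_eq]
  have h : (2:ℝ)^j * (Nat.factorial j : ℝ) ≠ 0 := by positivity
  field_simp

lemma u1zero (t : ℝ) : iteratedDeriv 2 (legendre 1) t = 0 := by
  rw [d2_eq]
  have : derivative^[1+2] ((X^2-1 : ℝ[X])^1) = 0 := by
    apply iterate_derivative_eq_zero
    rw [pow_one, show (1 : ℝ[X]) = C 1 from (map_one C).symm, natDegree_X_pow_sub_C]
    norm_num
  rw [this, eval_zero, mul_zero]

lemma derivrec (m : ℕ) (t : ℝ) :
    (2*(m:ℝ)+5) * (t * iteratedDeriv 2 (legendre (m+2)) t)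
    = ((m:ℝ)+4) * iteratedDeriv 2 (legendre (m+1)) t
      + ((m:ℝ)+1) * iteratedDeriv 2 (legendre (m+3)) t := by
  have K := congrArg (Polynomial.eval t) (key m)
  simp only [eval_mul, eval_add, eval_X, eval_natCast, eval_ofNat, eval_one] at K
  rw [show (m:ℕ)+4 = (m+2)+2 from rfl, show (m:ℕ)+3 = (m+1)+2 from rfl,
    show (m:ℕ)+5 = (m+3)+2 from rfl, eval_eq, eval_eq, eval_eq] at K
  have hne : (2:ℝ)^(m+3) * ((Nat.factorial (m+3) : ℝ)) ≠ 0 := by positivity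
  apply mul_left_cancel₀ hne
  simp only [Nat.factorial_succ, pow_succ] at K ⊢
  push_cast at K ⊢
  linear_combination K

/- ### Square-root layer -/

noncomputable def sqA (x : ℝ) : ℝ :=
  Real.sqrt ((2 * x + 1) / (2 * (x + 2) * (x + 1) * x * (x - 1)))

noncomputable def sqB (x : ℝ) : ℝ :=
  Real.sqrt (((x + 2) * (x - 2)) / ((2 * x + 1) * (2 * x - 1)))

lemma C1R (x : ℝ) (hx : 3 ≤ x) :
    (2*x+1) * (sqB x * sqA (x-1)) = (x+2) * sqA x := by
  unfold sqA sqB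
  have hB : (0:ℝ) ≤ ((x + 2) * (x - 2)) / ((2 * x + 1) * (2 * x - 1)) := by
    apply div_nonneg <;> nlinarith
  rw [← Real.sqrt_mul hB]
  have l2 : ∀ c y : ℝ, 0 ≤ c → c * Real.sqrt y = Real.sqrt (c^2 * y) := by
    intro c y hc
    rw [Real.sqrt_mul (by positivity), Real.sqrt_sq hc]
  rw [l2 _ _ (by linarith : (0:ℝ) ≤ 2*x+1), l2 _ _ (by linarith : (0:ℝ) ≤ x+2)]
  congr 1
  have d1pos : (0:ℝ) < (2*x+1)*(2*x-1) := by nlinarith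
  have d2pos : (0:ℝ) < 2*((x-1)+2)*((x-1)+1)*(x-1)*((x-1)-1) :=
    mul_pos (mul_pos (mul_pos (by linarith) (by linarith)) (by linarith)) (by linarith)
  have d3pos : (0:ℝ) < 2*(x+2)*(x+1)*x*(x-1) :=
    mul_pos (mul_pos (mul_pos (by linarith) (by linarith)) (by linarith)) (by linarith)
  rw [div_mul_div_comm, ← mul_div_assoc, ← mul_div_assoc,
    div_eq_div_iff (ne_of_gt (mul_pos d1pos d2pos)) (ne_of_gt d3pos)]
  ring

lemma C2R (x : ℝ) (hx : 2 ≤ x) :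
    (2*x+1) * (sqB (x+1) * sqA (x+1)) = (x-1) * sqA x := by
  unfold sqA sqB
  have hB : (0:ℝ) ≤ ((x+1 + 2) * (x+1 - 2)) / ((2 * (x+1) + 1) * (2 * (x+1) - 1)) := by
    apply div_nonneg <;> nlinarith
  rw [← Real.sqrt_mul hB]
  have l2 : ∀ c y : ℝ, 0 ≤ c → c * Real.sqrt y = Real.sqrt (c^2 * y) := by
    intro c y hc
    rw [Real.sqrt_mul (by positivity), Real.sqrt_sq hc]
  rw [l2 _ _ (by linarith : (0:ℝ) ≤ 2*x+1), l2 _ _ (by linarith : (0:ℝ) ≤ x-1)]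
  congr 1
  have d1pos : (0:ℝ) < (2*(x+1)+1)*(2*(x+1)-1) := by nlinarith
  have d2pos : (0:ℝ) < 2*((x+1)+2)*((x+1)+1)*(x+1)*((x+1)-1) :=
    mul_pos (mul_pos (mul_pos (by linarith) (by linarith)) (by linarith)) (by linarith)
  have d3pos : (0:ℝ) < 2*(x+2)*(x+1)*x*(x-1) :=
    mul_pos (mul_pos (mul_pos (by linarith) (by linarith)) (by linarith)) (by linarith)
  rw [div_mul_div_comm, ← mul_div_assoc, ← mul_div_assoc,
    div_eq_div_iff (ne_of_gt (mul_pos d1pos d2pos)) (ne_of_gt d3pos)]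
  ring

/- ### Assembly -/

lemma eta_eq (j : ℕ) (t : ℝ) :
    _root_.eta (j+2) t = sqA ((j+2 : ℕ) : ℝ) * (1 - t^2) * iteratedDeriv 2 (legendre (j+2)) t := by
  unfold _root_.eta sqA
  rw [if_neg (by omega)]

lemma bCoef_eq (j : ℕ) : bCoef j = sqB ((j : ℕ) : ℝ) := rfl

lemma term1 (m : ℕ) (t : ℝ) :
    (2*((m+2:ℕ):ℝ)+1) * (bCoef (m+2) * _root_.eta (m+1) t)
    = (((m+2:ℕ):ℝ)+2) * (sqA ((m+2:ℕ):ℝ)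
        * ((1 - t^2) * iteratedDeriv 2 (legendre (m+1)) t)) := by
  cases m with
  | zero =>
    rw [show (0:ℕ)+1 = 1 from rfl, u1zero]
    unfold _root_.eta
    rw [if_pos (by omega)]
    ring
  | succ k =>
    have hx : (3:ℝ) ≤ ((k+3:ℕ):ℝ) := by push_cast; linarith [Nat.cast_nonneg (α := ℝ) k]
    have c := C1R ((k+3:ℕ):ℝ) hx
    rw [show ((k+3:ℕ):ℝ) - 1 = ((k+2:ℕ):ℝ) by push_cast; ring] at c
    rw [show (k+1)+2 = k+3 from rfl, show (k+1)+1 = k+2 from rfl, bCoef_eq,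
      eta_eq k t]
    linear_combination ((1 - t^2) * iteratedDeriv 2 (legendre (k+2)) t) * c

lemma term2 (m : ℕ) (t : ℝ) :
    (2*((m+2:ℕ):ℝ)+1) * (bCoef (m+3) * _root_.eta (m+3) t)
    = (((m+2:ℕ):ℝ)-1) * (sqA ((m+2:ℕ):ℝ)
        * ((1 - t^2) * iteratedDeriv 2 (legendre (m+3)) t)) := by
  have hx : (2:ℝ) ≤ ((m+2:ℕ):ℝ) := by push_cast; linarith [Nat.cast_nonneg (α := ℝ) m]
  have c := C2R ((m+2:ℕ):ℝ) hx
  rw [show ((m+2:ℕ):ℝ) + 1 = ((m+3:ℕ):ℝ) by push_cast; ring] at c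
  rw [bCoef_eq, show (m:ℕ)+3 = (m+1)+2 from rfl, eta_eq (m+1) t,
    show (m+1)+2 = m+3 from rfl]
  linear_combination ((1 - t^2) * iteratedDeriv 2 (legendre (m+3)) t) * c

end EtaRec

/-- Identities (5.2.25)–(5.2.26): `t η_ℓ = b_ℓ η_{ℓ−1} + b_{ℓ+1} η_{ℓ+1}` for `ℓ ≥ 2`. -/
theorem mul_eta_recurrence (ℓ : ℕ) (hℓ : 2 ≤ ℓ) (t : ℝ) (ht : t ∈ Set.Icc (-1 : ℝ) 1) :
    t * eta ℓ t = bCoef ℓ * eta (ℓ - 1) t + bCoef (ℓ + 1) * eta (ℓ + 1) t := by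
  obtain ⟨m, rfl⟩ : ∃ m, ℓ = m + 2 := ⟨ℓ - 2, by omega⟩
  rw [show (m+2) - 1 = m+1 from rfl, show (m+2) + 1 = m+3 from rfl]
  have h5 : (2*((m+2:ℕ):ℝ)+1) ≠ 0 := by positivity
  apply mul_left_cancel₀ h5
  rw [EtaRec.eta_eq m t]
  have R := EtaRec.derivrec m t
  have T1 := EtaRec.term1 m t
  have T2 := EtaRec.term2 m t
  push_cast at R T1 T2 ⊢
  linear_combination (EtaRec.sqA ((m:ℝ)+2) * (1 - t^2)) * R - T1 - T2
end
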